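/- Let m, n ∈ ℕ with n ≥ 1, let η ≥ 0, and let z : ℕ → ℝ^{2d} follow WOGDA. For every integer t ≥ m+1, letting z†_{t+1} denote the EPP update of z_t, it holds that ‖z†_{t+1} − z_{t+1}‖² = (Δ²𝒵_t)ᵀ · η²Ā²(I + n²η²Ā²)⁻¹ · (Δ²𝒵_t). -/

import Mathlib

open Matrix Finset

noncomputable section

/-- The strategy space ℝ^{2d}, with its Euclidean norm. -/
abbrev Vec (d : ℕ) := EuclideanSpace ℝ (Fin d ⊕ Fin d)

/-- The action of a (2d)×(2d) matrix on ℝ^{2d}. -/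
def mulVecE {d : ℕ} (M : Matrix (Fin d ⊕ Fin d) (Fin d ⊕ Fin d) ℝ) (z : Vec d) : Vec d :=
  WithLp.toLp 2 (M.mulVec z)

/-- A = [[0, B], [-Bᵀ, 0]] -/
def mkA {d : ℕ} (B : Matrix (Fin d) (Fin d) ℝ) :
    Matrix (Fin d ⊕ Fin d) (Fin d ⊕ Fin d) ℝ :=
  Matrix.fromBlocks 0 B (-Bᵀ) 0

/-- Ā = [[0, B], [Bᵀ, 0]] -/
def mkAbar {d : ℕ} (B : Matrix (Fin d) (Fin d) ℝ) :
    Matrix (Fin d ⊕ Fin d) (Fin d ⊕ Fin d) ℝ :=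
  Matrix.fromBlocks 0 B Bᵀ 0

/-- z follows WOGDA with delay m, prediction length n and step size η:
z_{t+1} - z_t = ηA z_{t-m} + (n+m)ηA(z_{t-m} - z_{t-m-1}) for all t ≥ m+1. -/
def FollowsWOGDA {d : ℕ} (A : Matrix (Fin d ⊕ Fin d) (Fin d ⊕ Fin d) ℝ)
    (m n : ℕ) (η : ℝ) (z : ℕ → Vec d) : Prop :=
  ∀ t : ℕ, m + 1 ≤ t →
    z (t + 1) - z t =
      η • mulVecE A (z (t - m)) +
      (((n : ℝ) + (m : ℝ)) * η) • mulVecE A (z (t - m) - z (t - m - 1))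

/-- z† is the EPP update of z with prediction length n and step size η. -/
def IsEPP {d : ℕ} (A : Matrix (Fin d ⊕ Fin d) (Fin d ⊕ Fin d) ℝ)
    (n η : ℝ) (z zdag : Vec d) : Prop :=
  zdag = z + η • mulVecE A z + (n * η) • mulVecE A (zdag - z)

/-- 𝒵_t = n Σ_{s=1}^{m+1} z_{t-s} + Σ_{s=2}^{m+1} Σ_{r=s}^{m+1} z_{t-r}. -/
def Zcal {d : ℕ} (m : ℕ) (n : ℝ) (z : ℕ → Vec d) (t : ℕ) : Vec d :=
  n • ∑ s ∈ Finset.Icc 1 (m + 1), z (t - s) +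
  ∑ s ∈ Finset.Icc 2 (m + 1), ∑ r ∈ Finset.Icc s (m + 1), z (t - r)

/-- Δ²𝒵_t = 𝒵_{t+2} - 2𝒵_{t+1} + 𝒵_t. -/
def Delta2Zcal {d : ℕ} (m : ℕ) (n : ℝ) (z : ℕ → Vec d) (t : ℕ) : Vec d :=
  Zcal m n z (t + 2) - (2 : ℝ) • Zcal m n z (t + 1) + Zcal m n z t

/-- LCR_EPP(n) = 1 - ((2n-1)/2) η² λ_min² + (n²(2n-1)/2) η⁴ λ_min⁴. -/
def LCR_EPP (η lmin : ℝ) (n : ℝ) : ℝ :=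
  1 - (2 * n - 1) / 2 * η ^ 2 * lmin ^ 2 + n ^ 2 * (2 * n - 1) / 2 * η ^ 4 * lmin ^ 4

/-- ER(j,n), the error rate between WOGDA and EPP. -/
def ER (η lmax : ℝ) (m j n : ℕ) : ℝ :=
  2 * (2 * (n : ℝ) + m) * ((m : ℝ) + 1) * η ^ 3 * lmax ^ 3 +
  8 * ((n : ℝ) + m) ^ (j + 1) * η ^ (j + 2) * lmax ^ (j + 2) +
  2 * (2 * (n : ℝ) + m + 1) * ((n : ℝ) + m) ^ (2 * j) * η ^ (2 * j + 1) * lmax ^ (2 * j + 1)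


-- ===== Auxiliary lemmas =====

section Aux
variable {d : ℕ}

lemma mkA_transpose (B : Matrix (Fin d) (Fin d) ℝ) : (mkA B)ᵀ = -(mkA B) := by
  simp [mkA, Matrix.fromBlocks_transpose, Matrix.fromBlocks_neg]

lemma mkAbar_transpose (B : Matrix (Fin d) (Fin d) ℝ) : (mkAbar B)ᵀ = mkAbar B := by
  simp [mkAbar, Matrix.fromBlocks_transpose]

lemma mkA_mul_self (B : Matrix (Fin d) (Fin d) ℝ) :
    mkA B * mkA B = -(mkAbar B * mkAbar B) := by
  simp [mkA, mkAbar, Matrix.fromBlocks_multiply, Matrix.fromBlocks_neg, Matrix.mul_neg,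
    Matrix.neg_mul]

lemma Zcal_zero (n : ℝ) (z : ℕ → Vec d) (u : ℕ) : Zcal 0 n z u = n • z (u - 1) := by
  simp [Zcal]

lemma Zcal_succ (m : ℕ) (n : ℝ) (z : ℕ → Vec d) (u : ℕ) :
    Zcal (m+1) n z u = Zcal m n z u + (n + ((m:ℝ)+1)) • z (u - (m+2)) := by
  unfold Zcal
  rw [Finset.sum_Icc_succ_top (a:=1) (b:=m+1) (by omega),
      Finset.sum_Icc_succ_top (a:=2) (b:=m+1) (by omega)]
  have h1 : ∀ s ∈ Finset.Icc 2 (m+1), (∑ r ∈ Finset.Icc s (m+1+1), z (u - r)) =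
      (∑ r ∈ Finset.Icc s (m+1), z (u - r)) + z (u - (m+2)) := by
    intro s hs
    simp only [Finset.mem_Icc] at hs
    rw [Finset.sum_Icc_succ_top (by omega)]
  rw [Finset.sum_congr rfl h1, Finset.sum_add_distrib, Finset.sum_const, Nat.card_Icc]
  have hc : (m + 1 + 1 - 2) • z (u - (m+2)) = (m : ℝ) • z (u - (m+2)) := by
    rw [show m+1+1-2 = m from by omega, ← Nat.cast_smul_eq_nsmul ℝ]
  rw [hc]
  have : ∑ r ∈ Finset.Icc (m+1+1) (m+1+1), z (u - r) = z (u - (m+2)) := by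
    rw [Finset.Icc_self, Finset.sum_singleton]
  rw [this]
  module

lemma delta2_eq (n : ℝ) (z : ℕ → Vec d) :
    ∀ m t : ℕ, m + 1 ≤ t →
      Delta2Zcal m n z t =
        n • (z (t+1) - z t) + (z t - z (t - m)) - (n + (m:ℝ)) • (z (t - m) - z (t - m - 1)) := by
  intro m
  induction m with
  | zero =>
    intro t ht
    unfold Delta2Zcal
    rw [Zcal_zero, Zcal_zero, Zcal_zero]
    rw [show t+2-1 = t+1 from by omega, show t+1-1 = t from by omega,
        show t - 0 = t from by omega]
    push_cast
    module
  | succ m ih =>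
    intro t ht
    have key : Delta2Zcal (m+1) n z t = Delta2Zcal m n z t +
        (n + ((m:ℝ)+1)) • (z (t - m) - (2:ℝ) • z (t - m - 1) + z (t - (m+2))) := by
      unfold Delta2Zcal
      rw [Zcal_succ, Zcal_succ, Zcal_succ,
          show t+2-(m+2) = t - m from by omega,
          show t+1-(m+2) = t - m - 1 from by omega]
      module
    rw [key, ih t (by omega)]
    rw [show t - (m+1) = t - m - 1 from by omega,
        show t - m - 1 - 1 = t - (m+2) from by omega]
    push_cast
    module

lemma mulVecE_add (M : Matrix (Fin d ⊕ Fin d) (Fin d ⊕ Fin d) ℝ) (x y : Vec d) :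
    mulVecE M (x + y) = mulVecE M x + mulVecE M y := by
  simp [mulVecE, Matrix.mulVec_add]
lemma mulVecE_sub (M : Matrix (Fin d ⊕ Fin d) (Fin d ⊕ Fin d) ℝ) (x y : Vec d) :
    mulVecE M (x - y) = mulVecE M x - mulVecE M y := by
  simp [mulVecE, Matrix.mulVec_sub]
lemma mulVecE_smul (M : Matrix (Fin d ⊕ Fin d) (Fin d ⊕ Fin d) ℝ) (c : ℝ) (x : Vec d) :
    mulVecE M (c • x) = c • mulVecE M x := by
  simp [mulVecE, Matrix.mulVec_smul]
lemma smul_mulVecE (M : Matrix (Fin d ⊕ Fin d) (Fin d ⊕ Fin d) ℝ) (c : ℝ) (x : Vec d) :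
    mulVecE (c • M) x = c • mulVecE M x := by
  simp [mulVecE, Matrix.smul_mulVec]
lemma sub_mulVecE (M N : Matrix (Fin d ⊕ Fin d) (Fin d ⊕ Fin d) ℝ) (x : Vec d) :
    mulVecE (M - N) x = mulVecE M x - mulVecE N x := by
  simp [mulVecE, Matrix.sub_mulVec]
lemma one_mulVecE (x : Vec d) :
    mulVecE (1 : Matrix (Fin d ⊕ Fin d) (Fin d ⊕ Fin d) ℝ) x = x := by
  simp [mulVecE]
lemma mulVecE_comp (M N : Matrix (Fin d ⊕ Fin d) (Fin d ⊕ Fin d) ℝ) (x : Vec d) :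
    mulVecE M (mulVecE N x) = mulVecE (M * N) x := by
  simp [mulVecE, Matrix.mulVec_mulVec]
lemma dotE (M : Matrix (Fin d ⊕ Fin d) (Fin d ⊕ Fin d) ℝ) (x y : Vec d) :
    mulVecE M x ⬝ᵥ y = x ⬝ᵥ mulVecE Mᵀ y := by
  unfold mulVecE
  simp only [WithLp.ofLp_toLp]
  rw [Matrix.dotProduct_mulVec, Matrix.vecMul_transpose]

end Aux

section MatrixAlg
variable {d : ℕ} (B : Matrix (Fin d) (Fin d) ℝ) (c : ℝ)

local notation "R" => Matrix (Fin d ⊕ Fin d) (Fin d ⊕ Fin d) ℝ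
local notation "A" => mkA B
local notation "S" => mkAbar B * mkAbar B
local notation "NN" => (1 : Matrix (Fin d ⊕ Fin d) (Fin d ⊕ Fin d) ℝ) + c^2 • (mkAbar B * mkAbar B)

lemma S_posSemidef : ((c:ℝ)^2 • (mkAbar B * mkAbar B)).PosSemidef := by
  have h : (c • mkAbar B)ᴴ * (c • mkAbar B) = c^2 • (mkAbar B * mkAbar B) := by
    rw [Matrix.conjTranspose_eq_transpose_of_trivial, Matrix.transpose_smul, mkAbar_transpose,
      Matrix.smul_mul, Matrix.mul_smul, smul_smul, sq]
  exact h ▸ Matrix.posSemidef_conjTranspose_mul_self _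

lemma N_posDef : (NN).PosDef :=
  Matrix.PosDef.add_posSemidef Matrix.PosDef.one (S_posSemidef B c)

lemma N_det : IsUnit (NN).det :=
  isUnit_iff_ne_zero.mpr (N_posDef B c).det_pos.ne'

lemma N_transpose : (NN)ᵀ = NN := by
  rw [Matrix.transpose_add, Matrix.transpose_one, Matrix.transpose_smul, Matrix.transpose_mul,
    mkAbar_transpose]

lemma fac1 : ((1 : R) + c • A) * ((1 : R) - c • A) = NN := by
  simp only [mul_sub, add_mul, one_mul, mul_one, Matrix.smul_mul, Matrix.mul_smul, smul_smul,
    mkA_mul_self, smul_neg]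
  module

lemma fac2 : ((1 : R) - c • A) * ((1 : R) + c • A) = NN := by
  simp only [mul_add, sub_mul, one_mul, mul_one, Matrix.smul_mul, Matrix.mul_smul, smul_smul,
    mkA_mul_self, smul_neg]
  module

lemma commAS : A * S = S * A := by
  have h3 : A * -(S) = -(S) * A := by rw [← mkA_mul_self, ← mul_assoc]
  rwa [mul_neg, neg_mul, neg_inj] at h3

lemma commAN : A * NN = NN * A := by
  rw [mul_add, add_mul, mul_one, one_mul, Matrix.mul_smul, Matrix.smul_mul, commAS]

lemma commANinv : A * (NN)⁻¹ = (NN)⁻¹ * A := by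
  have h4 : A * (NN)⁻¹ = (NN)⁻¹ * (NN * A) * (NN)⁻¹ := by
    rw [← mul_assoc, Matrix.nonsing_inv_mul _ (N_det B c), one_mul]
  rw [h4, ← commAN, ← mul_assoc, mul_assoc ((NN)⁻¹ * A) (NN) (NN)⁻¹,
    Matrix.mul_nonsing_inv _ (N_det B c), mul_one]

lemma det1 : IsUnit (((1:R) - c • A)).det := by
  have h := N_det B c
  rw [← fac1 B c, Matrix.det_mul] at h
  exact (IsUnit.mul_iff.mp h).2

lemma addNinv : ((1:R) + c • A) * (NN)⁻¹ = (NN)⁻¹ * ((1:R) + c • A) := by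
  rw [add_mul, mul_add, one_mul, mul_one, Matrix.smul_mul, Matrix.mul_smul, commANinv]

lemma subNinv : ((1:R) - c • A) * (NN)⁻¹ = (NN)⁻¹ * ((1:R) - c • A) := by
  rw [sub_mul, mul_sub, one_mul, mul_one, Matrix.smul_mul, Matrix.mul_smul, commANinv]

lemma keyMat : ((1:R) - c • A) * ((NN)⁻¹ * ((1:R) + c • A) * A) = A := by
  rw [← mul_assoc, ← mul_assoc, subNinv, mul_assoc ((NN)⁻¹) _ ((1:R) + c • A), fac2,
    mul_assoc, ← mul_assoc, Matrix.nonsing_inv_mul _ (N_det B c), one_mul]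

lemma PTP (η : ℝ) :
    (η • ((NN)⁻¹ * ((1:R) + c • A) * A))ᵀ * (η • ((NN)⁻¹ * ((1:R) + c • A) * A))
      = η^2 • ((S) * (NN)⁻¹) := by
  have hT : ((NN)⁻¹)ᵀ = (NN)⁻¹ := by rw [Matrix.transpose_nonsing_inv, N_transpose]
  have hPT : (η • ((NN)⁻¹ * ((1:R) + c • A) * A))ᵀ
      = η • ((-(A)) * (((1:R) - c • A) * (NN)⁻¹)) := by
    rw [Matrix.transpose_smul, Matrix.transpose_mul, Matrix.transpose_mul, hT, mkA_transpose,
      Matrix.transpose_add, Matrix.transpose_one, Matrix.transpose_smul, mkA_transpose,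
      smul_neg, ← sub_eq_add_neg]
  rw [hPT, Matrix.smul_mul, Matrix.mul_smul, smul_smul, ← sq]
  congr 1
  have rA : ∀ X : Matrix (Fin d ⊕ Fin d) (Fin d ⊕ Fin d) ℝ,
      (NN)⁻¹ * (A * X) = A * ((NN)⁻¹ * X) := fun X => by
    rw [← mul_assoc, ← commANinv, mul_assoc]
  have rA' : (NN)⁻¹ * A = A * (NN)⁻¹ := (commANinv B c).symm
  have radd : ∀ X : Matrix (Fin d ⊕ Fin d) (Fin d ⊕ Fin d) ℝ,
      (NN)⁻¹ * (((1:R) + c • A) * X) = ((1:R) + c • A) * ((NN)⁻¹ * X) := fun X => by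
    rw [← mul_assoc, ← addNinv, mul_assoc]
  have rfac : ∀ X : Matrix (Fin d ⊕ Fin d) (Fin d ⊕ Fin d) ℝ,
      ((1:R) - c • A) * (((1:R) + c • A) * X) = (NN) * X := fun X => by
    rw [← mul_assoc, fac2]
  have rN : ∀ X : Matrix (Fin d ⊕ Fin d) (Fin d ⊕ Fin d) ℝ,
      (NN) * (A * X) = A * ((NN) * X) := fun X => by
    rw [← mul_assoc, ← commAN, mul_assoc]
  have hNN : (NN) * ((NN)⁻¹ * (NN)⁻¹) = (NN)⁻¹ := by
    rw [← mul_assoc, Matrix.mul_nonsing_inv _ (N_det B c), one_mul]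
  conv_lhs => simp only [mul_assoc, neg_mul]
  conv_lhs => simp only [radd, rA, rA', rfac, rN]
  rw [hNN, ← mul_assoc, mkA_mul_self, neg_mul, neg_neg]

end MatrixAlg

/-- Lemma 3: exact dynamics of the error between WOGDA and EPP. -/
theorem wogda_epp_error_dynamics
    (d : ℕ) (hd : 0 < d) (B : Matrix (Fin d) (Fin d) ℝ) (hB : IsUnit B.det)
    (m n : ℕ) (hn : 1 ≤ n) (η : ℝ) (hη : 0 ≤ η)
    (z : ℕ → Vec d) (hz : FollowsWOGDA (mkA B) m n η z)
    (t : ℕ) (ht : m + 1 ≤ t)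
    (zdag : Vec d) (hzdag : IsEPP (mkA B) (n : ℝ) η (z t) zdag) :
    ‖zdag - z (t + 1)‖ ^ 2 = (Delta2Zcal m (n : ℝ) z t) ⬝ᵥ
      ((η ^ 2 • (mkAbar B * mkAbar B) *
        ((1 : Matrix (Fin d ⊕ Fin d) (Fin d ⊕ Fin d) ℝ) +
          ((n : ℝ) ^ 2 * η ^ 2) • (mkAbar B * mkAbar B))⁻¹).mulVec
        (Delta2Zcal m (n : ℝ) z t)) := by
  classical
  have hc2 : (n:ℝ)^2 * η^2 = ((n:ℝ)*η)^2 := by ring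
  rw [hc2]
  set w := Delta2Zcal m (n:ℝ) z t with hw_def
  have hw : w = (n:ℝ) • (z (t+1) - z t) + (z t - z (t - m))
      - ((n:ℝ) + (m:ℝ)) • (z (t - m) - z (t - m - 1)) := delta2_eq (n:ℝ) z m t ht
  have hb := hz t ht
  have hdag := hzdag
  simp only [IsEPP] at hdag
  have h5 : zdag - ((n:ℝ)*η) • mulVecE (mkA B) zdag
      = z t + η • mulVecE (mkA B) (z t) - ((n:ℝ)*η) • mulVecE (mkA B) (z t) := by
    have h := congrArg (fun v : Vec d => v - ((n:ℝ)*η) • mulVecE (mkA B) zdag) hdag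
    rw [h, mulVecE_sub]
    module
  have hb' : z t - z (t+1) = -(η • mulVecE (mkA B) (z (t - m)))
      - (((n:ℝ)+(m:ℝ))*η) • mulVecE (mkA B) (z (t - m) - z (t - m - 1)) := by
    rw [← neg_sub (z (t+1)) (z t), hb]
    module
  have Key : mulVecE ((1 : Matrix (Fin d ⊕ Fin d) (Fin d ⊕ Fin d) ℝ) - ((n:ℝ)*η) • mkA B)
      (zdag - z (t+1)) = η • mulVecE (mkA B) w := by
    rw [sub_mulVecE, one_mulVecE, smul_mulVecE, mulVecE_sub]
    rw [hw, mulVecE_sub, mulVecE_add, mulVecE_sub, mulVecE_smul, mulVecE_smul, mulVecE_sub]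
    have expand : zdag - z (t+1)
          - ((n:ℝ)*η) • (mulVecE (mkA B) zdag - mulVecE (mkA B) (z (t+1)))
        = (zdag - ((n:ℝ)*η) • mulVecE (mkA B) zdag) + (z t - z (t+1)) - z t
          + ((n:ℝ)*η) • mulVecE (mkA B) (z (t+1)) := by module
    rw [expand, h5, hb', mulVecE_sub]
    module
  have hdet1 := det1 B ((n:ℝ)*η)
  set P : Matrix (Fin d ⊕ Fin d) (Fin d ⊕ Fin d) ℝ :=
    η • (((1 : Matrix (Fin d ⊕ Fin d) (Fin d ⊕ Fin d) ℝ)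
        + ((n:ℝ)*η)^2 • (mkAbar B * mkAbar B))⁻¹
      * ((1 : Matrix (Fin d ⊕ Fin d) (Fin d ⊕ Fin d) ℝ) + ((n:ℝ)*η) • mkA B)
      * mkA B) with hP_def
  have he : zdag - z (t+1) = mulVecE P w := by
    have h6 : mulVecE ((1 : Matrix (Fin d ⊕ Fin d) (Fin d ⊕ Fin d) ℝ) - ((n:ℝ)*η) • mkA B)
        (mulVecE P w)
        = mulVecE ((1 : Matrix (Fin d ⊕ Fin d) (Fin d ⊕ Fin d) ℝ) - ((n:ℝ)*η) • mkA B)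
            (zdag - z (t+1)) := by
      rw [mulVecE_comp, hP_def, Matrix.mul_smul, keyMat B ((n:ℝ)*η), smul_mulVecE, Key]
    have h7 := congrArg
      (fun v : Vec d => mulVecE
        (((1 : Matrix (Fin d ⊕ Fin d) (Fin d ⊕ Fin d) ℝ) - ((n:ℝ)*η) • mkA B)⁻¹) v) h6
    simp only [mulVecE_comp] at h7
    rw [← mul_assoc, Matrix.nonsing_inv_mul _ hdet1, one_mul, one_mulVecE] at h7
    exact h7.symm
  have hnorm : ‖zdag - z (t+1)‖^2 = (zdag - z (t+1)).ofLp ⬝ᵥ (zdag - z (t+1)).ofLp := by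
    rw [← real_inner_self_eq_norm_sq]
    simp only [PiLp.inner_apply, dotProduct, RCLike.inner_apply, conj_trivial, mul_comm]
  rw [hnorm, he]
  have hfin : mulVecE P w ⬝ᵥ mulVecE P w = w ⬝ᵥ mulVecE (Pᵀ * P) w := by
    rw [dotE, mulVecE_comp]
  rw [hfin, hP_def, PTP B ((n:ℝ)*η) η, ← Matrix.smul_mul]
  rfl
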